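/- In the setting described (two commuting Heisenberg families π_L, π_R on M at levels κ and −κ, and a smooth family e_{(n)} with the commutation relations of the vertex operator e^α), for all x ∈ 𝔥 and all integers m, n: if m ≤ 0 then [π_L(x)_{(m)}, A_n] = κ(x,α)·A_{m+n} and [π_R(x)_{(m)}, A_n] = −κ(x,α)·A_{m+n}; if m ≥ 1 then [π_L(x)_{(m)}, A_n] = 0 and [π_R(x)_{(m)}, A_n] = 0. -/

import Mathlib

/-!
Write `S(z) = ∑_{n<0} b_{(n)} z^{-n} / (-n)`, so that `E_r` is the coefficient of `z^{-r}` in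
`exp S(z) = ∑_k S(z)^k / k!`. The Heisenberg relations give `[π(x)_{(m)}, b_{(i)}] = 0` for
`i < 0` unless `i = -m`. So for `m ≤ 0`, `π(x)_{(m)}` commutes with every `E_r`, and
`[π(x)_{(m)}, A_n]` only sees `[π(x)_{(m)}, e_{(k)}] = ±κ(x,α) e_{(m+k)}`, giving `±κ(x,α) A_{m+n}`.
For `m ≥ 1`, the scalar `[π(x)_{(m)}, b_{(-m)}] = ∓m κ(x,α)` makes the commutator act on
`exp S(z)` as multiplication by `∓κ(x,α) z^m`, i.e. `[π(x)_{(m)}, E_r] = ∓κ(x,α) E_{r+m}`;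
after reindexing `r ↦ r + m`, this cancels the contribution `±κ(x,α) A_{m+n}` of `e`.
-/

open scoped BigOperators

variable {H M : Type*} [AddCommGroup H] [Module ℂ H] [AddCommGroup M] [Module ℂ M]

noncomputable def negTuples (k : ℕ) (r : ℤ) : Finset (Fin k → ℤ) :=
  (Fintype.piFinset fun _ => Finset.Icc r (-1)).filter fun f => ∑ j, f j = r

/-- The coefficient `E_r` of `z^{−r}` in `exp(Σ_{n<0} b_{(n)}/(−n) z^{−n})`
for a commuting family `b : ℤ → End ℂ M`; it is `id` for `r = 0` and `0` for
`r ≥ 1`. -/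
noncomputable def Ecoef (b : ℤ → Module.End ℂ M) (r : ℤ) : Module.End ℂ M :=
  if 1 ≤ r then 0
  else
    ∑ k ∈ Finset.range ((-r).toNat + 1),
      (k.factorial : ℂ)⁻¹ •
        ∑ f ∈ negTuples k r,
          (∏ j, (-(f j : ℂ))⁻¹) • (List.ofFn fun j => b (f j)).prod

def diagB (πL πR : H → ℤ → Module.End ℂ M) (α : H) : ℤ → Module.End ℂ M :=
  fun n => -πL α n - πR α n

/-- `A_n v := Σ_{r ≤ 0} E_r (e_{(n−r)} v)`, a finite sum by smoothness
(made total via `finsum`). -/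
noncomputable def Aop (b e : ℤ → Module.End ℂ M) (n : ℤ) (v : M) : M :=
  ∑ᶠ r : ℤ, Ecoef b r (e (n - r) v)

open Finset Function

theorem mem_negTuples {k : ℕ} {r : ℤ} {f : Fin k → ℤ} :
    f ∈ negTuples k r ↔ (∀ j, f j ≤ -1) ∧ ∑ j, f j = r := by
  simp only [negTuples, mem_filter, Fintype.mem_piFinset, mem_Icc]
  refine ⟨fun h => ⟨fun j => (h.1 j).2, h.2⟩, fun ⟨hneg, hsum⟩ => ⟨fun j => ⟨?_, hneg j⟩, hsum⟩⟩
  have := single_le_sum (f := fun l => -f l) (fun l _ => by linarith [hneg l]) (mem_univ j)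
  simp only [sum_neg_distrib, hsum] at this
  linarith

theorem le_neg_of_mem_negTuples {k : ℕ} {r : ℤ} {f : Fin k → ℤ} (hf : f ∈ negTuples k r) :
    r ≤ -k := by
  obtain ⟨hneg, rfl⟩ := mem_negTuples.mp hf
  simpa using sum_le_sum fun j (_ : j ∈ univ) => hneg j

theorem cons_mem_negTuples {k : ℕ} {r i : ℤ} {g : Fin k → ℤ} :
    Fin.cons i g ∈ negTuples (k + 1) r ↔ i ≤ -1 ∧ g ∈ negTuples k (r - i) := by
  simp only [mem_negTuples, Fin.forall_fin_succ, Fin.sum_univ_succ, Fin.cons_zero, Fin.cons_succ]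
  constructor
  · rintro ⟨⟨hi, hg⟩, hsum⟩
    exact ⟨hi, hg, by omega⟩
  · rintro ⟨hi, hg, hsum⟩
    exact ⟨⟨hi, hg⟩, by omega⟩

/-- The coefficient of `z^{-r}` in `S(z)^k`. -/
noncomputable def seriesPowCoeff (b : ℤ → Module.End ℂ M) (k : ℕ) (r : ℤ) : Module.End ℂ M :=
  ∑ f ∈ negTuples k r, (∏ j, (-(f j : ℂ))⁻¹) • (List.ofFn fun j => b (f j)).prod

theorem seriesPowCoeff_eq_zero (b : ℤ → Module.End ℂ M) {k : ℕ} {r : ℤ} (h : -(k : ℤ) < r) :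
    seriesPowCoeff b k r = 0 :=
  sum_eq_zero fun _ hf => absurd (le_neg_of_mem_negTuples hf) (not_le.mpr h)

theorem seriesPowCoeff_succ (b : ℤ → Module.End ℂ M) (k : ℕ) {r s : ℤ} (hs : s ≤ r) :
    seriesPowCoeff b (k + 1) r
      = ∑ i ∈ Icc s (-1), (-(i : ℂ))⁻¹ • (b i * seriesPowCoeff b k (r - i)) := by
  simp only [seriesPowCoeff, mul_sum, smul_sum]
  rw [sum_sigma']
  refine sum_nbij' (fun f => ⟨f 0, Fin.tail f⟩) (fun p => Fin.cons p.1 p.2) ?_ ?_ ?_ ?_ ?_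
  · intro f hf
    rw [← Fin.cons_self_tail f, cons_mem_negTuples] at hf
    have := le_neg_of_mem_negTuples hf.2
    exact mem_sigma.mpr ⟨mem_Icc.mpr ⟨show s ≤ f 0 by omega, hf.1⟩, hf.2⟩
  · rintro ⟨i, g⟩ hp
    obtain ⟨hi, hg⟩ := mem_sigma.mp hp
    exact cons_mem_negTuples.mpr ⟨(mem_Icc.mp hi).2, hg⟩
  · intro f _
    exact Fin.cons_self_tail f
  · intro p _
    simp
  · intro f _
    rw [Fin.prod_univ_succ, List.ofFn_succ, List.prod_cons, mul_smul, mul_smul_comm]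
    rfl

theorem Ecoef_eq_zero (b : ℤ → Module.End ℂ M) {r : ℤ} (hr : 1 ≤ r) : Ecoef b r = 0 :=
  if_pos hr

theorem Ecoef_eq_sum (b : ℤ → Module.End ℂ M) {r : ℤ} {K : ℕ} (hK : (-r).toNat < K) :
    Ecoef b r = ∑ k ∈ range K, (k.factorial : ℂ)⁻¹ • seriesPowCoeff b k r := by
  have vanish : ∀ k ∈ range K, k ∉ range ((-r).toNat + 1) →
      (k.factorial : ℂ)⁻¹ • seriesPowCoeff b k r = 0 := fun k _ hk => by
    rw [seriesPowCoeff_eq_zero b (by simp at hk; omega), smul_zero]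
  rw [Ecoef]
  split_ifs with hr
  · exact (sum_eq_zero fun k _ => by rw [seriesPowCoeff_eq_zero b (by omega), smul_zero]).symm
  · exact sum_subset (range_subset_range.mpr (by omega)) vanish

section Commutator

variable {π : Module.End ℂ M} {b : ℤ → Module.End ℂ M} {m : ℤ} {c : ℂ}

-- `π * _ - _ * π` is a derivation and `[π, S(z)] = (c / m) z^m` is central, so it sends
-- `S(z)^k` to `k (c / m) z^m S(z)^(k-1)`; at `k = 0` the factor `k` hides the truncated `k - 1`.
theorem commutator_seriesPowCoeff (hm : 1 ≤ m)
    (hb : ∀ i ≤ -1, π * b i - b i * π = (if i = -m then c else 0) • 1) (k : ℕ) (r : ℤ) :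
    π * seriesPowCoeff b k r - seriesPowCoeff b k r * π
      = ((k : ℂ) * c / m) • seriesPowCoeff b (k - 1) (r + m) := by
  induction k generalizing r with
  | zero => simp [seriesPowCoeff, (Nat.cast_commute _ π).eq]
  | succ k ih =>
    have leibniz : ∀ i ∈ Icc r (-1),
        π * (b i * seriesPowCoeff b k (r - i)) - b i * seriesPowCoeff b k (r - i) * π
          = (if i = -m then c • seriesPowCoeff b k (r + m) else 0)
            + ((k : ℂ) * c / m) • (b i * seriesPowCoeff b (k - 1) (r + m - i)) := by
      intro i hi
      calc _ = (π * b i - b i * π) * seriesPowCoeff b k (r - i)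
              + b i * (π * seriesPowCoeff b k (r - i) - seriesPowCoeff b k (r - i) * π) := by
            noncomm_ring
        _ = _ := by
          rw [hb i (mem_Icc.mp hi).2, ih, sub_add_eq_add_sub]
          split_ifs with h <;> simp [h]
    have jump : ∑ i ∈ Icc r (-1),
        (-(i : ℂ))⁻¹ • (if i = -m then c • seriesPowCoeff b k (r + m) else 0)
          = (c / m) • seriesPowCoeff b k (r + m) := by
      simp_rw [smul_ite, smul_zero, sum_ite_eq', smul_smul]
      split_ifs with h
      · simp [div_eq_inv_mul]
      · rw [seriesPowCoeff_eq_zero b (by simp at h; omega), smul_zero]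
    rw [seriesPowCoeff_succ b k le_rfl, mul_sum, sum_mul, ← sum_sub_distrib]
    calc _ = ∑ i ∈ Icc r (-1), (-(i : ℂ))⁻¹ •
            ((if i = -m then c • seriesPowCoeff b k (r + m) else 0)
              + ((k : ℂ) * c / m) • (b i * seriesPowCoeff b (k - 1) (r + m - i))) :=
          sum_congr rfl fun i hi => by rw [mul_smul_comm, smul_mul_assoc, ← smul_sub, leibniz i hi]
      _ = (c / m + (k : ℂ) * c / m) • seriesPowCoeff b k (r + m) := by
        simp_rw [smul_add, sum_add_distrib, jump, smul_comm _ ((k : ℂ) * c / m), ← smul_sum,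
          add_smul]
        rcases k with _ | k
        · simp
        · rw [Nat.add_sub_cancel, ← seriesPowCoeff_succ b k (by omega)]
      _ = _ := by
        rw [Nat.add_sub_cancel, Nat.cast_succ]
        congr 1
        ring

theorem commutator_Ecoef (hm : 1 ≤ m)
    (hb : ∀ i ≤ -1, π * b i - b i * π = (if i = -m then c else 0) • 1) (r : ℤ) :
    π * Ecoef b r - Ecoef b r * π = (c / m) • Ecoef b (r + m) := by
  set K := (-r).toNat + 1
  rw [Ecoef_eq_sum b (K := K + 1) (by omega), Ecoef_eq_sum b (K := K) (by omega), mul_sum,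
    sum_mul, ← sum_sub_distrib, sum_range_succ', smul_sum]
  simp only [mul_smul_comm, smul_mul_assoc, ← smul_sub, commutator_seriesPowCoeff hm hb,
    smul_smul, Nat.add_sub_cancel, Nat.cast_zero, zero_mul, zero_div, zero_smul, smul_zero,
    add_zero]
  refine sum_congr rfl fun k _ => ?_
  rw [Nat.factorial_succ]
  congr 1
  push_cast
  field_simp

theorem commute_Ecoef (hb : ∀ i ≤ -1, Commute π (b i)) (r : ℤ) : Commute π (Ecoef b r) := by
  rw [Ecoef]
  split_ifs
  · exact Commute.zero_right π
  refine .sum_right _ _ _ fun k _ => .smul_right (.sum_right _ _ _ fun f hf => .smul_right ?_ _) _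
  refine Commute.list_prod_right _ _ fun x hx => ?_
  obtain ⟨j, rfl⟩ := List.mem_ofFn.mp hx
  exact hb _ ((mem_negTuples.mp hf).1 j)

end Commutator

section Aop

variable {b e : ℤ → Module.End ℂ M}

theorem hasFiniteSupport_Ecoef_apply (hsm : ∀ v : M, ∃ N : ℤ, ∀ n : ℤ, N ≤ n → e n v = 0)
    (n : ℤ) (v : M) : HasFiniteSupport fun r => Ecoef b r (e (n - r) v) := by
  obtain ⟨N, hN⟩ := hsm v
  refine (Set.finite_Icc (n - N + 1) 0).subset fun r hr => ?_
  by_contra hout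
  simp only [mem_support] at hr
  rcases le_or_gt r (n - N) with h | h
  · exact hr (by rw [hN (n - r) (by omega), map_zero])
  · exact hr (by rw [Ecoef_eq_zero b (by simp at hout; omega), LinearMap.zero_apply])

theorem commutator_Aop {π : Module.End ℂ M} {m : ℤ} {d c : ℂ}
    (hsm : ∀ v : M, ∃ N : ℤ, ∀ n : ℤ, N ≤ n → e n v = 0)
    (hE : ∀ r, π * Ecoef b r - Ecoef b r * π = d • Ecoef b (r + m))
    (he : ∀ k, π * e k - e k * π = c • e (m + k)) (n : ℤ) (v : M) :
    π (Aop b e n v) - Aop b e n (π v) = (d + c) • Aop b e (m + n) v := by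
  have hfin := hasFiniteSupport_Ecoef_apply (b := b) hsm
  have shift_eq : (fun r => Ecoef b (r + m) (e (n - r) v))
      = (fun s => Ecoef b s (e (m + n - s) v)) ∘ (· + m) := by
    funext r
    rw [comp_apply, show m + n - (r + m) = n - r by ring]
  have hfin_shift : HasFiniteSupport fun r => Ecoef b (r + m) (e (n - r) v) :=
    shift_eq ▸ (hfin (m + n) v).comp_of_injective (add_left_injective m)
  have shift : ∑ᶠ r, Ecoef b (r + m) (e (n - r) v) = Aop b e (m + n) v := by
    rw [shift_eq]
    exact finsum_comp_equiv (Equiv.addRight m) (f := fun s => Ecoef b s (e (m + n - s) v))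
  have termwise : ∀ r, π (Ecoef b r (e (n - r) v)) - Ecoef b r (e (n - r) (π v))
      = d • Ecoef b (r + m) (e (n - r) v) + c • Ecoef b r (e (m + n - r) v) := by
    intro r
    have hEr := LinearMap.congr_fun (hE r) (e (n - r) v)
    have her := LinearMap.congr_fun (he (n - r)) v
    simp only [Module.End.mul_apply, LinearMap.sub_apply, LinearMap.smul_apply] at hEr her
    calc _ = (π (Ecoef b r (e (n - r) v)) - Ecoef b r (π (e (n - r) v)))
            + Ecoef b r (π (e (n - r) v) - e (n - r) (π v)) := by rw [map_sub]; abel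
      _ = _ := by rw [hEr, her, map_smul, add_sub_assoc m n r]
  calc π (Aop b e n v) - Aop b e n (π v)
      = ∑ᶠ r, (π (Ecoef b r (e (n - r) v)) - Ecoef b r (e (n - r) (π v))) := by
        rw [Aop, Aop, map_finsum π (hfin n v),
          ← finsum_sub_distrib ((hfin n v).fun_comp (map_zero π)) (hfin n (π v))]
    _ = d • ∑ᶠ r, Ecoef b (r + m) (e (n - r) v) + c • ∑ᶠ r, Ecoef b r (e (m + n - r) v) := by
        rw [finsum_congr termwise, finsum_add_distrib (hfin_shift.fun_comp (smul_zero d))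
          ((hfin (m + n) v).fun_comp (smul_zero c)), smul_finsum' d hfin_shift,
          smul_finsum' c (hfin (m + n) v)]
    _ = (d + c) • Aop b e (m + n) v := by rw [shift, ← Aop, add_smul]

theorem commutator_Aop_of_commutator_eq {π : Module.End ℂ M} {m : ℤ} {c : ℂ}
    (hsm : ∀ v : M, ∃ N : ℤ, ∀ n : ℤ, N ≤ n → e n v = 0)
    (hb : ∀ i ≤ -1, π * b i - b i * π = (if i = -m then -(m : ℂ) * c else 0) • 1)
    (he : ∀ k, π * e k - e k * π = c • e (m + k)) (n : ℤ) :
    (m ≤ 0 → ∀ v : M, π (Aop b e n v) - Aop b e n (π v) = c • Aop b e (m + n) v) ∧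
    (1 ≤ m → ∀ v : M, π (Aop b e n v) = Aop b e n (π v)) := by
  refine ⟨fun hm v => ?_, fun hm v => ?_⟩
  · have hcomm : ∀ i ≤ -1, Commute π (b i) := fun i hi =>
      sub_eq_zero.mp (by rw [hb i hi, if_neg (by omega), zero_smul])
    have hE : ∀ r, π * Ecoef b r - Ecoef b r * π = (0 : ℂ) • Ecoef b (r + m) := fun r => by
      rw [(commute_Ecoef hcomm r).eq, sub_self, zero_smul]
    simpa using commutator_Aop hsm hE he n v
  · have hE : ∀ r, π * Ecoef b r - Ecoef b r * π = (-c) • Ecoef b (r + m) := fun r => by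
      have hm0 : (m : ℂ) ≠ 0 := by exact_mod_cast (by omega : m ≠ 0)
      rw [commutator_Ecoef hm hb r, neg_mul, neg_div, mul_div_cancel_left₀ c hm0]
    simpa [sub_eq_zero] using commutator_Aop hsm hE he n v

end Aop

section Diagonal

variable {κ : H →ₗ[ℂ] H →ₗ[ℂ] ℂ} {πL πR : H → ℤ → Module.End ℂ M}

theorem commutator_diagB_left
    (hLL : ∀ x y : H, ∀ m n : ℤ,
      πL x m * πL y n - πL y n * πL x m
        = if m + n = 0 then ((m : ℂ) * κ x y) • (1 : Module.End ℂ M) else 0)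
    (hLR : ∀ x y : H, ∀ m n : ℤ, πL x m * πR y n = πR y n * πL x m) (x α : H) (m i : ℤ) :
    πL x m * diagB πL πR α i - diagB πL πR α i * πL x m
      = (if i = -m then -(m : ℂ) * κ x α else 0) • 1 := by
  calc _ = -(πL x m * πL α i - πL α i * πL x m) - (πL x m * πR α i - πR α i * πL x m) := by
        simp only [diagB]
        noncomm_ring
    _ = _ := by
      rw [hLL, hLR, sub_self, sub_zero]
      split_ifs <;> first | omega | simp

theorem commutator_diagB_right
    (hRR : ∀ x y : H, ∀ m n : ℤ,
      πR x m * πR y n - πR y n * πR x m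
        = if m + n = 0 then (-(m : ℂ) * κ x y) • (1 : Module.End ℂ M) else 0)
    (hLR : ∀ x y : H, ∀ m n : ℤ, πL x m * πR y n = πR y n * πL x m) (x α : H) (m i : ℤ) :
    πR x m * diagB πL πR α i - diagB πL πR α i * πR x m
      = (if i = -m then -(m : ℂ) * -κ x α else 0) • 1 := by
  calc _ = -(πR x m * πL α i - πL α i * πR x m) - (πR x m * πR α i - πR α i * πR x m) := by
        simp only [diagB]
        noncomm_ring
    _ = _ := by
      rw [hRR, hLR, sub_self, neg_zero, zero_sub]
      split_ifs <;> first | omega | simp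

end Diagonal

theorem stmt_8_general (κ : H →ₗ[ℂ] H →ₗ[ℂ] ℂ) (α : H)
    (πL πR : H → ℤ → Module.End ℂ M)
    (hLL : ∀ x y : H, ∀ m n : ℤ,
      πL x m * πL y n - πL y n * πL x m
        = if m + n = 0 then ((m : ℂ) * κ x y) • (1 : Module.End ℂ M) else 0)
    (hRR : ∀ x y : H, ∀ m n : ℤ,
      πR x m * πR y n - πR y n * πR x m
        = if m + n = 0 then (-(m : ℂ) * κ x y) • (1 : Module.End ℂ M) else 0)
    (hLR : ∀ x y : H, ∀ m n : ℤ, πL x m * πR y n = πR y n * πL x m)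
    (e : ℤ → Module.End ℂ M)
    (hsmooth : ∀ v : M, ∃ N : ℤ, ∀ n : ℤ, N ≤ n → e n v = 0)
    (hLe : ∀ x : H, ∀ m n : ℤ, πL x m * e n - e n * πL x m = κ x α • e (m + n))
    (hRe : ∀ x : H, ∀ m n : ℤ, πR x m * e n - e n * πR x m = -(κ x α) • e (m + n)) :
    ∀ x : H, ∀ m n : ℤ,
      (m ≤ 0 → ∀ v : M,
        πL x m (Aop (diagB πL πR α) e n v) - Aop (diagB πL πR α) e n (πL x m v)
          = κ x α • Aop (diagB πL πR α) e (m + n) v) ∧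
      (m ≤ 0 → ∀ v : M,
        πR x m (Aop (diagB πL πR α) e n v) - Aop (diagB πL πR α) e n (πR x m v)
          = -(κ x α) • Aop (diagB πL πR α) e (m + n) v) ∧
      (1 ≤ m → ∀ v : M,
        πL x m (Aop (diagB πL πR α) e n v) = Aop (diagB πL πR α) e n (πL x m v)) ∧
      (1 ≤ m → ∀ v : M,
        πR x m (Aop (diagB πL πR α) e n v) = Aop (diagB πL πR α) e n (πR x m v)) := by
  intro x m n
  obtain ⟨hL₀, hL₁⟩ := commutator_Aop_of_commutator_eq hsmooth
    (fun i _ => commutator_diagB_left hLL hLR x α m i) (hLe x m) n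
  obtain ⟨hR₀, hR₁⟩ := commutator_Aop_of_commutator_eq hsmooth
    (fun i _ => commutator_diagB_right hRR hLR x α m i) (hRe x m) n
  exact ⟨hL₀, hR₀, hL₁, hR₁⟩

theorem stmt_8 (κ : H →ₗ[ℂ] H →ₗ[ℂ] ℂ) (hκ : ∀ x y : H, κ x y = κ y x) (α : H)
    (πL πR : H → ℤ → Module.End ℂ M)
    (hLL : ∀ x y : H, ∀ m n : ℤ,
      πL x m * πL y n - πL y n * πL x m
        = if m + n = 0 then ((m : ℂ) * κ x y) • (1 : Module.End ℂ M) else 0)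
    (hRR : ∀ x y : H, ∀ m n : ℤ,
      πR x m * πR y n - πR y n * πR x m
        = if m + n = 0 then (-(m : ℂ) * κ x y) • (1 : Module.End ℂ M) else 0)
    (hLR : ∀ x y : H, ∀ m n : ℤ, πL x m * πR y n = πR y n * πL x m)
    (e : ℤ → Module.End ℂ M)
    (hsmooth : ∀ v : M, ∃ N : ℤ, ∀ n : ℤ, N ≤ n → e n v = 0)
    (hLe : ∀ x : H, ∀ m n : ℤ, πL x m * e n - e n * πL x m = κ x α • e (m + n))
    (hRe : ∀ x : H, ∀ m n : ℤ, πR x m * e n - e n * πR x m = -(κ x α) • e (m + n)) :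
    ∀ x : H, ∀ m n : ℤ,
      (m ≤ 0 → ∀ v : M,
        πL x m (Aop (diagB πL πR α) e n v) - Aop (diagB πL πR α) e n (πL x m v)
          = κ x α • Aop (diagB πL πR α) e (m + n) v) ∧
      (m ≤ 0 → ∀ v : M,
        πR x m (Aop (diagB πL πR α) e n v) - Aop (diagB πL πR α) e n (πR x m v)
          = -(κ x α) • Aop (diagB πL πR α) e (m + n) v) ∧
      (1 ≤ m → ∀ v : M,
        πL x m (Aop (diagB πL πR α) e n v) = Aop (diagB πL πR α) e n (πL x m v)) ∧
      (1 ≤ m → ∀ v : M,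
        πR x m (Aop (diagB πL πR α) e n v) = Aop (diagB πL πR α) e n (πR x m v)) :=
  stmt_8_general κ α πL πR hLL hRR hLR e hsmooth hLe hRe
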